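/- arXiv:2408.13346 — 2 statements merged into one kernel-verified Lean document; each statement's English description precedes it below -/
import Mathlib

section
/- For every integer n > 0, e_3p(n) = (1/6) ( n^3 * p(n) - Σ_{k=1}^{n} ( 3n * σ_2(k) - 2 * σ_3(k) ) * p(n-k) ). -/
/-!
Newton's identity writes `6 e₃` of the parts of `π ⊢ n` as `n³ - 3 n p₂(π) + 2 p₃(π)`, where
`pⱼ(π)` is the sum of the `j`-th powers of the parts, so it remains to sum power sums over all
partitions. Removing `m` copies of `d` is a bijection from the partitions of `n` with at least
`m` parts equal to `d` onto the partitions of `n - m d`; hence `d` occurs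
`∑_{m ≥ 1} p(n - m d)` times in total, and collecting the terms by `k = m d` gives
`∑_π ∑_{x ∈ π} f x = ∑_{k=1}^n p(n - k) ∑_{d ∣ k} f d`.
-/

open Finset

/-- `e_j p(n)`, the sum of the `j`-th elementary symmetric polynomial evaluated at the
parts over all partitions of `n`. -/
def ejp (j n : ℕ) : ℕ := ∑ π : Nat.Partition n, π.parts.esymm j

/-- `σ_j(n)`, the sum of the `j`-th powers of the divisors of `n`. -/
def sigmaPow (j n : ℕ) : ℕ := ∑ d ∈ n.divisors, d ^ j

namespace Multiset

variable {R S : Type*}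

theorem esymm_cons_succ [CommSemiring R] (a : R) (s : Multiset R) (k : ℕ) :
    (a ::ₘ s).esymm (k + 1) = s.esymm (k + 1) + a * s.esymm k := by
  simp [esymm, powersetCard_cons, sum_map_mul_left]

theorem map_esymm [CommSemiring R] [CommSemiring S] (f : R →+* S) (s : Multiset R) (k : ℕ) :
    f (s.esymm k) = (s.map f).esymm k := by
  simp [esymm, map_multiset_sum, map_multiset_prod, powersetCard_map, map_map]

theorem esymm_one [CommSemiring R] (s : Multiset R) : s.esymm 1 = s.sum := by
  simp [esymm, powersetCard_one]

theorem two_mul_esymm_two [CommRing R] (s : Multiset R) :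
    2 * s.esymm 2 = s.sum ^ 2 - (s.map (· ^ 2)).sum := by
  induction s using Multiset.induction with
  | empty => simp [esymm, powersetCard_zero_right]
  | cons a s ih =>
    rw [esymm_cons_succ, esymm_one, map_cons, sum_cons, sum_cons, mul_add, ih]
    ring

theorem six_mul_esymm_three [CommRing R] (s : Multiset R) :
    6 * s.esymm 3 = s.sum ^ 3 - 3 * s.sum * (s.map (· ^ 2)).sum + 2 * (s.map (· ^ 3)).sum := by
  induction s using Multiset.induction with
  | empty => simp [esymm, powersetCard_zero_right]
  | cons a s ih =>
    rw [esymm_cons_succ, map_cons, map_cons, sum_cons, sum_cons, sum_cons, mul_add, ih]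
    linear_combination 3 * a * two_mul_esymm_two s

end Multiset

theorem Nat.image_mul_Icc_div {n d : ℕ} (hd : 0 < d) :
    (Icc 1 (n / d)).image (· * d) = {k ∈ Icc 1 n | d ∣ k} := by
  ext k
  simp only [mem_image, mem_filter, mem_Icc, Nat.le_div_iff_mul_le hd]
  constructor
  · rintro ⟨m, ⟨hm, hmn⟩, rfl⟩
    exact ⟨⟨Nat.one_le_iff_ne_zero.2 (Nat.mul_ne_zero (by omega) hd.ne'), hmn⟩, dvd_mul_left d m⟩
  · rintro ⟨⟨hk, hkn⟩, m, rfl⟩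
    exact ⟨m, ⟨Nat.pos_of_mul_pos_left hk, by rwa [mul_comm]⟩, mul_comm m d⟩

namespace Nat.Partition

def removePartsEquiv {n : ℕ} (s : Multiset ℕ) (hs : ∀ i ∈ s, 0 < i) (hsn : s.sum ≤ n) :
    {π : n.Partition // s ≤ π.parts} ≃ (n - s.sum).Partition where
  toFun π :=
    { parts := π.1.parts - s
      parts_pos hi := π.1.parts_pos (Multiset.mem_of_le (Multiset.sub_le_self _ _) hi)
      parts_sum := by
        have := congrArg Multiset.sum (Multiset.sub_add_cancel π.2)
        rw [Multiset.sum_add, π.1.parts_sum] at this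
        omega }
  invFun μ :=
    ⟨{ parts := μ.parts + s
       parts_pos hi := (Multiset.mem_add.1 hi).elim μ.parts_pos (hs _)
       parts_sum := by rw [Multiset.sum_add, μ.parts_sum]; omega },
      Multiset.le_add_left _ _⟩
  left_inv π := Subtype.ext <| Nat.Partition.ext <| Multiset.sub_add_cancel π.2
  right_inv μ := Nat.Partition.ext <| Multiset.add_sub_cancel_right

theorem card_replicate_le_parts {n d m : ℕ} (hd : 0 < d) (h : m * d ≤ n) :
    Fintype.card {π : n.Partition // Multiset.replicate m d ≤ π.parts} =
      Fintype.card (n - m * d).Partition := by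
  have hs : (Multiset.replicate m d).sum = m * d := by simp
  rw [Fintype.card_congr (removePartsEquiv _ (fun i hi => (Multiset.eq_of_mem_replicate hi) ▸ hd)
    (hs ▸ h)), hs]

theorem count_le_div {n : ℕ} (π : n.Partition) (d : ℕ) : π.parts.count d ≤ n / d := by
  rcases d.eq_zero_or_pos with rfl | hd
  · simpa using fun h => lt_irrefl 0 (π.parts_pos h)
  have hle : Multiset.replicate (π.parts.count d) d ≤ π.parts :=
    Multiset.le_count_iff_replicate_le.1 le_rfl
  obtain ⟨u, hu⟩ := Multiset.le_iff_exists_add.1 hle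
  have hsum := congrArg Multiset.sum hu
  rw [Multiset.sum_add, Multiset.sum_replicate, smul_eq_mul, π.parts_sum] at hsum
  rw [Nat.le_div_iff_mul_le hd]
  omega

theorem sum_count_parts {n d : ℕ} (hd : 0 < d) :
    ∑ π : n.Partition, π.parts.count d =
      ∑ k ∈ Icc 1 n with d ∣ k, Fintype.card (n - k).Partition := by
  rw [← Nat.image_mul_Icc_div hd, sum_image fun _ _ _ _ h => Nat.eq_of_mul_eq_mul_right hd h]
  have hcount (π : n.Partition) :
      π.parts.count d = #{m ∈ Icc 1 (n / d) | m ≤ π.parts.count d} := by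
    have := π.count_le_div d
    rw [show {m ∈ Icc 1 (n / d) | m ≤ π.parts.count d} = Icc 1 (π.parts.count d) by
      ext; simp only [mem_filter, mem_Icc]; omega, Nat.card_Icc, Nat.add_sub_cancel]
  calc ∑ π : n.Partition, π.parts.count d
      = ∑ π : n.Partition, #{m ∈ Icc 1 (n / d) | m ≤ π.parts.count d} :=
        sum_congr rfl fun π _ => hcount π
    _ = ∑ m ∈ Icc 1 (n / d), #{π : n.Partition | m ≤ π.parts.count d} :=
      sum_card_bipartiteAbove_eq_sum_card_bipartiteBelow _
    _ = ∑ m ∈ Icc 1 (n / d), Fintype.card (n - m * d).Partition := by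
      refine sum_congr rfl fun m hm => ?_
      simp only [← Fintype.card_subtype, Multiset.le_count_iff_replicate_le]
      exact card_replicate_le_parts hd ((Nat.le_div_iff_mul_le hd).1 (mem_Icc.1 hm).2)

variable {M : Type*} [AddCommMonoid M]

theorem sum_map_parts {n : ℕ} (π : n.Partition) (f : ℕ → M) :
    (π.parts.map f).sum = ∑ d ∈ Icc 1 n, π.parts.count d • f d := by
  rw [Finset.sum_multiset_map_count]
  refine sum_subset (fun d hd => ?_) (fun d _ hd => ?_)
  · rw [Multiset.mem_toFinset] at hd
    exact mem_Icc.2 ⟨π.parts_pos hd, le_of_mem_parts hd⟩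
  · rw [Multiset.count_eq_zero.2 (Multiset.mem_toFinset.not.1 hd), zero_smul]

theorem sum_sum_map_parts (n : ℕ) (f : ℕ → M) :
    ∑ π : n.Partition, (π.parts.map f).sum =
      ∑ k ∈ Icc 1 n, Fintype.card (n - k).Partition • ∑ d ∈ k.divisors, f d := by
  calc ∑ π : n.Partition, (π.parts.map f).sum
      = ∑ d ∈ Icc 1 n, (∑ π : n.Partition, π.parts.count d) • f d := by
        simp only [sum_map_parts, sum_smul]
        exact sum_comm
    _ = ∑ d ∈ Icc 1 n, ∑ k ∈ Icc 1 n with d ∣ k, Fintype.card (n - k).Partition • f d := by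
        refine sum_congr rfl fun d hd => ?_
        rw [sum_count_parts (mem_Icc.1 hd).1, sum_smul]
    _ = ∑ k ∈ Icc 1 n, ∑ d ∈ k.divisors, Fintype.card (n - k).Partition • f d := by
        refine sum_comm' fun d k => ?_
        simp only [mem_filter, mem_Icc, Nat.mem_divisors]
        constructor
        · rintro ⟨⟨hd, -⟩, ⟨hk, hkn⟩, hdk⟩
          exact ⟨⟨hdk, by omega⟩, hk, hkn⟩
        · rintro ⟨⟨hdk, -⟩, hk, hkn⟩
          have := Nat.le_of_dvd hk hdk
          exact ⟨⟨Nat.pos_of_dvd_of_pos hdk hk, by omega⟩, ⟨hk, hkn⟩, hdk⟩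
    _ = _ := by simp only [smul_sum]

end Nat.Partition

theorem e3p_formula_general (n : ℕ) :
    (ejp 3 n : ℚ) =
      (1 / 6) * ((n : ℚ) ^ 3 * (Fintype.card (Nat.Partition n) : ℚ) -
        ∑ k ∈ Finset.Icc 1 n,
          (3 * (n : ℚ) * (sigmaPow 2 k : ℚ) - 2 * (sigmaPow 3 k : ℚ)) *
            (Fintype.card (Nat.Partition (n - k)) : ℚ)) := by
  have hpow (j : ℕ) : ∑ π : n.Partition, (π.parts.map fun d : ℕ => (d : ℚ) ^ j).sum =
      ∑ k ∈ Icc 1 n, (sigmaPow j k : ℚ) * Fintype.card (n - k).Partition := by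
    simp only [Nat.Partition.sum_sum_map_parts, sigmaPow, nsmul_eq_mul, Nat.cast_sum,
      Nat.cast_pow, mul_comm]
  have hterm (π : n.Partition) : (π.parts.esymm 3 : ℚ) =
      (1 / 6) * ((n : ℚ) ^ 3 - 3 * n * (π.parts.map fun d : ℕ => (d : ℚ) ^ 2).sum +
        2 * (π.parts.map fun d : ℕ => (d : ℚ) ^ 3).sum) := by
    have hcast : (π.parts.esymm 3 : ℚ) = (π.parts.map (Nat.cast : ℕ → ℚ)).esymm 3 :=
      Multiset.map_esymm (Nat.castRingHom ℚ) _ _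
    have hsum : (π.parts.map (Nat.cast : ℕ → ℚ)).sum = n := by
      rw [← Nat.cast_multiset_sum, π.parts_sum]
    have h6 := (π.parts.map (Nat.cast : ℕ → ℚ)).six_mul_esymm_three
    simp only [hsum, Multiset.map_map, Function.comp_def] at h6
    rw [hcast]
    linear_combination h6 / 6
  rw [ejp, Nat.cast_sum, sum_congr rfl fun π _ => hterm π, ← mul_sum, sum_add_distrib,
    sum_sub_distrib, sum_const, card_univ, ← mul_sum, ← mul_sum, hpow, hpow]
  simp only [sub_mul, sum_sub_distrib, mul_assoc, ← mul_sum, nsmul_eq_mul]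
  ring

theorem e3p_formula (n : ℕ) (hn : 0 < n) :
    (ejp 3 n : ℚ) =
      (1 / 6) * ((n : ℚ) ^ 3 * (Fintype.card (Nat.Partition n) : ℚ) -
        ∑ k ∈ Finset.Icc 1 n,
          (3 * (n : ℚ) * (sigmaPow 2 k : ℚ) - 2 * (sigmaPow 3 k : ℚ)) *
            (Fintype.card (Nat.Partition (n - k)) : ℚ)) :=
  e3p_formula_general n
end

section
/- For every integer n > 0, e_2B(n) = (1/2) ( n^2 * B(n) - Σ_{k=1}^{n} σ_{2,bin}(k) * B(n-k) ). -/
open Finset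
open scoped Classical

/-- The finset of binary partitions of `n` (all parts are powers of `2`). -/
noncomputable def binaryPartitions (n : ℕ) : Finset (Nat.Partition n) :=
  Finset.univ.filter fun π => ∀ i ∈ π.parts, ∃ k : ℕ, i = 2 ^ k

/-- `B(n)`, the number of binary partitions of `n`. -/
noncomputable def Bbin (n : ℕ) : ℕ := (binaryPartitions n).card

/-- `e_j B(n)`, the sum of the `j`-th elementary symmetric polynomial evaluated at the
parts over all binary partitions of `n`. -/
noncomputable def ejB (j n : ℕ) : ℕ := ∑ π ∈ binaryPartitions n, π.parts.esymm j

/-- `σ_{j,bin}(n) = Σ_{d ≥ 0, 2^d ∣ n} 2^{d·j}`. -/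
def sigmaBin (j n : ℕ) : ℕ :=
  ∑ d ∈ (Finset.range (n + 1)).filter (fun d => 2 ^ d ∣ n), 2 ^ (d * j)

/-!
Since the parts of a partition `λ` of `n` sum to `n`, squaring gives
`n ^ 2 = Σ λᵢ ^ 2 + 2 e₂(λ)`, so it suffices to sum the squares of the parts over all binary
partitions. For `r ≥ 1`, deleting `r` parts equal to `2 ^ d` is a bijection from the binary
partitions of `n` with at least `r` such parts onto the binary partitions of `n - r 2 ^ d`.
Hence the parts equal to `2 ^ d`, counted over all binary partitions of `n`, number
`Σ_{r ≥ 1} B(n - r 2 ^ d)`, and grouping the terms by `k = r 2 ^ d` turns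
`Σ_d 4 ^ d Σ_{r ≥ 1} B(n - r 2 ^ d)` into `Σ_k σ_{2,bin}(k) B(n - k)`.
-/

theorem Multiset.sq_sum_eq_sum_map_sq_add_two_mul_esymm_two {R : Type*} [CommSemiring R]
    (s : Multiset R) : s.sum ^ 2 = (s.map (· ^ 2)).sum + 2 * s.esymm 2 := by
  induction s using Multiset.induction with
  | empty => simp [Multiset.esymm, Multiset.powersetCard_zero_right]
  | cons a s ih =>
    have h : (a ::ₘ s).esymm 2 = s.esymm 2 + a * s.sum := by
      simp only [Multiset.esymm, Multiset.powersetCard_cons, Multiset.powersetCard_one,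
        Multiset.map_add, Multiset.map_map, Multiset.sum_add]
      simp [Function.comp_def, Multiset.sum_map_mul_left (f := fun x => x)]
    rw [Multiset.sum_cons, Multiset.map_cons, Multiset.sum_cons, h, add_sq, ih]
    ring

theorem Nat.Partition.count_mul_le {n : ℕ} (π : n.Partition) (m : ℕ) :
    π.parts.count m * m ≤ n := by
  have hle := Multiset.le_count_iff_replicate_le.mp (le_refl (π.parts.count m))
  obtain ⟨u, hu⟩ := Multiset.le_iff_exists_add.mp hle
  have := congrArg Multiset.sum hu
  rw [Multiset.sum_add, π.parts_sum, Multiset.sum_replicate, smul_eq_mul] at this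
  omega

theorem mem_binaryPartitions {n : ℕ} {π : n.Partition} :
    π ∈ binaryPartitions n ↔ ∀ i ∈ π.parts, ∃ k : ℕ, i = 2 ^ k := by
  simp [binaryPartitions]

theorem card_filter_le_count_binaryPartitions {n r d : ℕ} (h : r * 2 ^ d ≤ n) :
    #{π ∈ binaryPartitions n | r ≤ π.parts.count (2 ^ d)} = Bbin (n - r * 2 ^ d) := by
  refine card_bij'
    (fun π hπ => ⟨π.parts - .replicate r (2 ^ d),
      fun hi => π.parts_pos (Multiset.mem_of_le tsub_le_self hi), by
        have hle := Multiset.le_count_iff_replicate_le.mp (mem_filter.mp hπ).2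
        have := congrArg Multiset.sum (tsub_add_cancel_of_le hle)
        rw [Multiset.sum_add, π.parts_sum, Multiset.sum_replicate, smul_eq_mul] at this
        omega⟩)
    (fun τ _ => ⟨τ.parts + .replicate r (2 ^ d), by
        intro i hi
        rcases Multiset.mem_add.mp hi with hi | hi
        · exact τ.parts_pos hi
        · rw [Multiset.eq_of_mem_replicate hi]; positivity, by
        rw [Multiset.sum_add, τ.parts_sum, Multiset.sum_replicate, smul_eq_mul]
        omega⟩) ?_ ?_ ?_ ?_
  · intro π hπ
    simp only [mem_filter, mem_binaryPartitions] at hπ ⊢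
    exact fun i hi => hπ.1 i (Multiset.mem_of_le tsub_le_self hi)
  · intro τ hτ
    simp only [mem_filter, mem_binaryPartitions] at hτ ⊢
    refine ⟨fun i hi => ?_, by simp⟩
    rcases Multiset.mem_add.mp hi with hi | hi
    · exact hτ i hi
    · exact ⟨d, Multiset.eq_of_mem_replicate hi⟩
  · intro π hπ
    exact Nat.Partition.ext
      (tsub_add_cancel_of_le (Multiset.le_count_iff_replicate_le.mp (mem_filter.mp hπ).2))
  · intro τ _
    exact Nat.Partition.ext (add_tsub_cancel_right _ _)

theorem sum_count_binaryPartitions (n d : ℕ) :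
    ∑ π ∈ binaryPartitions n, π.parts.count (2 ^ d) =
      ∑ k ∈ Icc 1 n with 2 ^ d ∣ k, Bbin (n - k) := by
  have hcount (c : ℕ) (hc : c * 2 ^ d ≤ n) :
      c = ∑ k ∈ Icc 1 n with 2 ^ d ∣ k, if k ≤ c * 2 ^ d then 1 else 0 := by
    rw [← sum_filter, filter_filter, ← card_eq_sum_ones]
    have : {k ∈ Icc 1 n | 2 ^ d ∣ k ∧ k ≤ c * 2 ^ d} = {k ∈ Ioc 0 (c * 2 ^ d) | 2 ^ d ∣ k} := by
      ext k; simp only [mem_filter, mem_Icc, mem_Ioc]; omega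
    rw [this, Nat.Ioc_filter_dvd_card_eq_div, Nat.mul_div_cancel _ (by positivity)]
  calc ∑ π ∈ binaryPartitions n, π.parts.count (2 ^ d)
      = ∑ π ∈ binaryPartitions n, ∑ k ∈ Icc 1 n with 2 ^ d ∣ k,
          if k ≤ π.parts.count (2 ^ d) * 2 ^ d then 1 else 0 :=
        sum_congr rfl fun π _ => hcount _ (π.count_mul_le _)
    _ = ∑ k ∈ Icc 1 n with 2 ^ d ∣ k, Bbin (n - k) := by
        rw [sum_comm]
        refine sum_congr rfl fun k hk => ?_
        obtain ⟨hk, r, rfl⟩ := mem_filter.mp hk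
        rw [mem_Icc, mul_comm] at hk
        rw [← card_filter, mul_comm, ← card_filter_le_count_binaryPartitions hk.2]
        simp only [Nat.mul_le_mul_right_iff (Nat.two_pow_pos d)]

theorem sum_map_parts_eq_sum_count_two_pow {M : Type*} [AddCommMonoid M] {n : ℕ}
    {π : n.Partition} (hπ : π ∈ binaryPartitions n) (f : ℕ → M) :
    (π.parts.map f).sum = ∑ d ∈ range (n + 1), π.parts.count (2 ^ d) • f (2 ^ d) := by
  have hsub : π.parts.toFinset ⊆ (range (n + 1)).image (2 ^ ·) := by
    intro i hi
    rw [Multiset.mem_toFinset] at hi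
    obtain ⟨d, rfl⟩ := mem_binaryPartitions.mp hπ i hi
    have : 2 ^ d ≤ n := π.parts_sum ▸ Multiset.le_sum_of_mem hi
    exact mem_image.mpr ⟨d, mem_range.mpr (by have := d.lt_two_pow_self; omega), rfl⟩
  rw [Finset.sum_multiset_map_count, sum_subset hsub, sum_image]
  · exact fun a _ b _ h => Nat.pow_right_injective le_rfl h
  · intro i _ hi
    rw [Multiset.count_eq_zero.mpr (by simpa using hi), zero_smul]

theorem sum_sigmaBin_mul {M : Type*} [CommSemiring M] (j n : ℕ) (g : ℕ → M) :
    ∑ k ∈ Icc 1 n, (sigmaBin j k : M) * g k =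
      ∑ d ∈ range (n + 1), (2 : M) ^ (d * j) * ∑ k ∈ Icc 1 n with 2 ^ d ∣ k, g k := by
  simp only [sigmaBin, Nat.cast_sum, sum_mul, mul_sum, Nat.cast_pow, Nat.cast_ofNat]
  refine sum_comm' fun k d => ?_
  simp only [mem_Icc, mem_filter, mem_range]
  constructor
  · rintro ⟨hk, hd, hdvd⟩
    exact ⟨⟨hk, hdvd⟩, by omega⟩
  · rintro ⟨⟨hk, hdvd⟩, -⟩
    have := Nat.le_of_dvd (by omega) hdvd
    have := Nat.lt_two_pow_self (n := d)
    exact ⟨hk, by omega, hdvd⟩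

theorem sum_powerSum_binaryPartitions (j n : ℕ) :
    ∑ π ∈ binaryPartitions n, (π.parts.map (· ^ j)).sum =
      ∑ k ∈ Icc 1 n, sigmaBin j k * Bbin (n - k) := by
  calc ∑ π ∈ binaryPartitions n, (π.parts.map (· ^ j)).sum
      = ∑ d ∈ range (n + 1), 2 ^ (d * j) * ∑ π ∈ binaryPartitions n, π.parts.count (2 ^ d) := by
        rw [sum_congr rfl fun π hπ => sum_map_parts_eq_sum_count_two_pow hπ _, sum_comm]
        simp only [mul_sum, smul_eq_mul, ← pow_mul, mul_comm]
    _ = ∑ k ∈ Icc 1 n, sigmaBin j k * Bbin (n - k) := by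
        simp only [sum_count_binaryPartitions]
        exact (sum_sigmaBin_mul j n _).symm

theorem e2B_formula_general (n : ℕ) :
    (ejB 2 n : ℚ) =
      (1 / 2) * ((n : ℚ) ^ 2 * (Bbin n : ℚ) -
        ∑ k ∈ Finset.Icc 1 n, (sigmaBin 2 k : ℚ) * (Bbin (n - k) : ℚ)) := by
  have h : n ^ 2 * Bbin n = ∑ k ∈ Icc 1 n, sigmaBin 2 k * Bbin (n - k) + 2 * ejB 2 n := by
    rw [← sum_powerSum_binaryPartitions, ejB, mul_sum, ← sum_add_distrib, Bbin,
      card_eq_sum_ones, mul_sum]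
    refine sum_congr rfl fun π _ => ?_
    rw [mul_one, ← Multiset.sq_sum_eq_sum_map_sq_add_two_mul_esymm_two, π.parts_sum]
  have hℚ := congrArg (Nat.cast : ℕ → ℚ) h
  push_cast at hℚ
  linarith

theorem e2B_formula (n : ℕ) (hn : 0 < n) :
    (ejB 2 n : ℚ) =
      (1 / 2) * ((n : ℚ) ^ 2 * (Bbin n : ℚ) -
        ∑ k ∈ Finset.Icc 1 n, (sigmaBin 2 k : ℚ) * (Bbin (n - k) : ℚ)) :=
  e2B_formula_general n
end
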